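/- arXiv:1611.06514 — 5 statements merged into one kernel-verified Lean document; each statement's English description precedes it below -/
import Mathlib

section
/- Let ζ₁,…,ζ_L be independent real-valued random variables on a probability space, each with mean zero and taking values in [−1,1] almost surely. Define the random vector [a;h] by a = ā + Σ_{ℓ=1}^L ζ_ℓ a^ℓ ∈ ℝⁿ and h = h̄ + Σ_{ℓ=1}^L ζ_ℓ h^ℓ ∈ ℝ, where ā, a¹,…,a^L ∈ ℝⁿ and h̄, h¹,…,h^L ∈ ℝ are fixed. Let Ω ≥ 0 and suppose x ∈ ℝⁿ satisfies the second-order cone inequality Ω·√(Σ_{ℓ=1}^L ((a^ℓ)ᵀx − h^ℓ)²) ≤ h̄ − āᵀx. Then Prob{ aᵀx > h } ≤ e^{−Ω²/2}. -/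
/-!
With `c ℓ = (aℓ)ᵀx - hℓ` and `t = h̄ - āᵀx`, the event `aᵀx > h` is `t < ∑ ℓ, c ℓ ζℓ`.
By Hoeffding's lemma each `ζℓ` is sub-Gaussian with variance proxy `1`, so by independence the
sum is sub-Gaussian with variance proxy `σ² = ∑ ℓ, c ℓ²`, and the Chernoff bound gives
`exp (-t² / (2σ²)) ≤ exp (-Ω² / 2)` because the cone constraint reads `Ω σ ≤ t`.
-/

open MeasureTheory ProbabilityTheory Real Finset NNReal

namespace ProbabilityTheory

variable {Ω : Type*} {mΩ : MeasurableSpace Ω} {μ : Measure Ω}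

lemma hasSubgaussianMGF_one_of_mem_Icc_neg_one_one [IsProbabilityMeasure μ] {X : Ω → ℝ}
    (hm : AEMeasurable X μ) (hb : ∀ᵐ ω ∂μ, X ω ∈ Set.Icc (-1 : ℝ) 1) (hc : μ[X] = 0) :
    HasSubgaussianMGF X 1 μ := by
  have h := hasSubgaussianMGF_of_mem_Icc_of_integral_eq_zero hm hb hc
  have hparam : (‖(1 : ℝ) - -1‖₊ / 2) ^ 2 = 1 := by
    ext
    norm_num
  rwa [hparam] at h

lemma HasSubgaussianMGF.sum_mul_of_iIndepFun {ι : Type*} {X : ι → Ω → ℝ}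
    (h_indep : iIndepFun X μ) {d : ι → ℝ≥0} {s : Finset ι}
    (h_subG : ∀ i ∈ s, HasSubgaussianMGF (X i) (d i) μ) (c : ι → ℝ) :
    HasSubgaussianMGF (fun ω ↦ ∑ i ∈ s, c i * X i ω) (∑ i ∈ s, ‖c i‖₊ ^ 2 * d i) μ := by
  convert HasSubgaussianMGF.sum_of_iIndepFun
    (h_indep.comp (fun i z ↦ c i * z) fun i ↦ measurable_const_mul (c i))
    (fun i hi ↦ (h_subG i hi).const_mul (c i)) using 3
  · rfl
  · congr 1
    exact NNReal.eq (by simp only [NNReal.coe_pow, coe_nnnorm, Real.norm_eq_abs, sq_abs]; rfl)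

lemma HasSubgaussianMGF.measureReal_gt_le_of_mul_sqrt_le [IsFiniteMeasure μ] {X : Ω → ℝ}
    {c : ℝ≥0} (hX : HasSubgaussianMGF X c μ) {r t : ℝ} (hr : 0 ≤ r) (ht : r * √c ≤ t) :
    μ.real {ω | t < X ω} ≤ exp (-r ^ 2 / 2) := by
  have ht0 : 0 ≤ t := (mul_nonneg hr (sqrt_nonneg _)).trans ht
  -- For `c = 0` the Chernoff bound is `exp 0 = 1` (division by zero), but then `X = 0` a.e.
  rcases eq_or_ne c 0 with rfl | hc
  · have hnull : μ {ω | t < X ω} = 0 := by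
      refine measure_mono_null_ae ?_ (measure_empty (μ := μ))
      filter_upwards [hX.ae_eq_zero_of_hasSubgaussianMGF_zero] with ω hω (hlt : t < X ω)
      rw [hω, Pi.zero_apply] at hlt
      exact absurd ht0 (not_le.2 hlt)
    simp [measureReal_def, hnull, exp_nonneg]
  have hc : (0 : ℝ) < c := by positivity
  have hsq : r ^ 2 * c ≤ t ^ 2 := by
    have := pow_le_pow_left₀ (mul_nonneg hr (sqrt_nonneg _)) ht 2
    rwa [mul_pow, sq_sqrt c.coe_nonneg] at this
  calc μ.real {ω | t < X ω} ≤ μ.real {ω | t ≤ X ω} :=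
        measureReal_mono fun ω (hω : t < X ω) ↦ hω.le
    _ ≤ exp (-t ^ 2 / (2 * c)) := hX.measure_ge_le ht0
    _ ≤ exp (-r ^ 2 / 2) := by
        refine exp_le_exp.2 ?_
        rw [div_le_div_iff₀ (by positivity) two_pos]
        nlinarith

end ProbabilityTheory

lemma affine_perturbation_gt_iff {ι κ : Type*} [Fintype ι] [Fintype κ]
    (abar x : ι → ℝ) (a : κ → ι → ℝ) (hbar : ℝ) (h z : κ → ℝ) :
    ∑ i, (abar i + ∑ ℓ, z ℓ * a ℓ i) * x i > hbar + ∑ ℓ, z ℓ * h ℓ ↔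
      hbar - ∑ i, abar i * x i < ∑ ℓ, (∑ i, a ℓ i * x i - h ℓ) * z ℓ := by
  have hexpand : ∑ i, (abar i + ∑ ℓ, z ℓ * a ℓ i) * x i =
      ∑ i, abar i * x i + ∑ ℓ, z ℓ * ∑ i, a ℓ i * x i := by
    simp_rw [add_mul, sum_add_distrib, sum_mul, mul_sum, mul_assoc]
    rw [sum_comm]
  have hcollect : ∑ ℓ, (∑ i, a ℓ i * x i - h ℓ) * z ℓ =
      ∑ ℓ, z ℓ * ∑ i, a ℓ i * x i - ∑ ℓ, z ℓ * h ℓ := by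
    rw [← sum_sub_distrib]
    exact sum_congr rfl fun ℓ _ ↦ by ring
  rw [hexpand, hcollect, gt_iff_lt]
  constructor <;> intro _ <;> linarith

/-- Proposition 2.1: if `x` satisfies the second-order cone inequality
`Ω √(∑ ((aℓ)ᵀx - hℓ)²) ≤ h̄ - āᵀx`, then for the random data
`a = ā + ∑ ζℓ aℓ`, `h = h̄ + ∑ ζℓ hℓ` with independent zero-mean `ζℓ ∈ [-1,1]` a.s.,
`Prob{aᵀx > h} ≤ exp (-Ω²/2)`. -/
theorem stmt_1 {α : Type*} [MeasurableSpace α] (μ : Measure α) [IsProbabilityMeasure μ]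
    (L n : ℕ) (ζ : Fin L → α → ℝ)
    (hmeas : ∀ ℓ, Measurable (ζ ℓ))
    (hindep : iIndepFun ζ μ)
    (hmean : ∀ ℓ, ∫ ω, ζ ℓ ω ∂μ = 0)
    (hbdd : ∀ ℓ, ∀ᵐ ω ∂μ, ζ ℓ ω ∈ Set.Icc (-1 : ℝ) 1)
    (abar : Fin n → ℝ) (a : Fin L → Fin n → ℝ) (hbar : ℝ) (h : Fin L → ℝ)
    (Om : ℝ) (hOm : 0 ≤ Om) (x : Fin n → ℝ)
    (hsocc : Om * Real.sqrt (∑ ℓ, (∑ i, a ℓ i * x i - h ℓ) ^ 2) ≤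
      hbar - ∑ i, abar i * x i) :
    μ {ω | ∑ i, (abar i + ∑ ℓ, ζ ℓ ω * a ℓ i) * x i >
        hbar + ∑ ℓ, ζ ℓ ω * h ℓ} ≤ ENNReal.ofReal (Real.exp (-Om ^ 2 / 2)) := by
  set c : Fin L → ℝ := fun ℓ ↦ ∑ i, a ℓ i * x i - h ℓ
  have hevent : {ω | ∑ i, (abar i + ∑ ℓ, ζ ℓ ω * a ℓ i) * x i > hbar + ∑ ℓ, ζ ℓ ω * h ℓ} =
      {ω | hbar - ∑ i, abar i * x i < ∑ ℓ ∈ univ, c ℓ * ζ ℓ ω} := by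
    ext ω
    exact affine_perturbation_gt_iff abar x a hbar h (ζ · ω)
  have hsubG := HasSubgaussianMGF.sum_mul_of_iIndepFun hindep (s := univ) (fun ℓ _ ↦
    hasSubgaussianMGF_one_of_mem_Icc_neg_one_one (hmeas ℓ).aemeasurable (hbdd ℓ) (hmean ℓ)) c
  have htail := hsubG.measureReal_gt_le_of_mul_sqrt_le hOm (t := hbar - ∑ i, abar i * x i)
    (by simpa using hsocc)
  rw [hevent, ENNReal.le_ofReal_iff_toReal_le (measure_ne_top μ _) (exp_nonneg _)]
  exact htail
end

section
/- Let ε ∈ (0,1) and set Ω = √(ln(ε^{−2})) = √(2 ln(1/ε)). Let ā, a¹,…,a^L ∈ ℝⁿ and h̄, h¹,…,h^L ∈ ℝ, and suppose x ∈ ℝⁿ satisfies Ω·√(Σ_{ℓ=1}^L ((a^ℓ)ᵀx − h^ℓ)²) ≤ h̄ − āᵀx. Then for EVERY probability distribution of a random vector ζ = (ζ₁,…,ζ_L) whose coordinates are independent, have mean zero, and take values in [−1,1] almost surely, one has Prob{ āᵀx + Σ_{ℓ=1}^L ζ_ℓ (a^ℓ)ᵀx > h̄ + Σ_{ℓ=1}^L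 ζ_ℓ h^ℓ } ≤ ε. -/
/-!
Hoeffding's lemma makes each `ζ ℓ` sub-Gaussian with variance proxy `1`, so by independence the
excess `∑ ℓ, ζ ℓ * c ℓ` of the left-hand side over the right-hand side, with
`c ℓ = (a ℓ)ᵀx - h ℓ`, is sub-Gaussian with variance proxy `‖c‖²`. The cone constraint puts the
threshold `hbar - abarᵀx` at least `Ω ‖c‖` away from `0`, and the Chernoff bound then gives the
tail `exp (-Ω² / 2) = ε`.
-/

open MeasureTheory ProbabilityTheory Real NNReal

lemma exp_neg_sqrt_log_one_div_sq_sq_div_two {ε : ℝ} (hε₀ : 0 < ε) (hε₁ : ε ≤ 1) :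
    exp (-√(log (1 / ε ^ 2)) ^ 2 / 2) = ε := by
  have hlog : 0 ≤ log (1 / ε ^ 2) :=
    log_nonneg (one_le_one_div (by positivity) (pow_le_one₀ hε₀.le hε₁))
  rw [sq_sqrt hlog, one_div, log_inv, log_pow]
  convert exp_log hε₀ using 2
  push_cast
  ring

namespace ProbabilityTheory.HasSubgaussianMGF

variable {Ω : Type*} {m : MeasurableSpace Ω} {μ : Measure Ω} {X : Ω → ℝ} {c : ℝ≥0}

lemma measureReal_lt_le_exp_neg_sq_div_two (h : HasSubgaussianMGF X c μ) {r t : ℝ}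
    (hr : 0 ≤ r) (ht : r * √c ≤ t) :
    μ.real {ω | t < X ω} ≤ exp (-r ^ 2 / 2) := by
  rcases eq_zero_or_pos c with rfl | hc
  · have ht₀ : 0 ≤ t := by simpa using ht
    have hnull : μ {ω | t < X ω} = 0 := by
      refine measure_mono_null (fun ω hω ↦ ?_) (ae_iff.1 h.ae_eq_zero_of_hasSubgaussianMGF_zero)
      simp only [Set.mem_ofPred_eq, Pi.zero_apply] at hω ⊢
      exact (ht₀.trans_lt hω).ne'
    simp [measureReal_def, hnull, exp_nonneg]
  · have hc' : (0 : ℝ) < c := hc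
    have : IsFiniteMeasure μ := by simpa [integrable_const_iff] using h.integrable_exp_mul 0
    calc μ.real {ω | t < X ω} ≤ μ.real {ω | t ≤ X ω} :=
          measureReal_mono fun ω (hω : t < X ω) ↦ hω.le
      _ ≤ exp (-t ^ 2 / (2 * c)) := h.measure_ge_le ((mul_nonneg hr (sqrt_nonneg _)).trans ht)
      _ ≤ exp (-r ^ 2 / 2) := by
        gcongr exp ?_
        rw [div_le_div_iff₀ (by positivity) two_pos, neg_mul, neg_mul, neg_le_neg_iff]
        calc r ^ 2 * (2 * c) = 2 * (r * √c) ^ 2 := by rw [mul_pow, sq_sqrt hc'.le]; ring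
          _ ≤ t ^ 2 * 2 := by nlinarith [mul_nonneg hr (sqrt_nonneg (c : ℝ))]

end ProbabilityTheory.HasSubgaussianMGF

section WeightedSum

variable {Ω ι : Type*} {m : MeasurableSpace Ω} {μ : Measure Ω} [Fintype ι] {ζ : ι → Ω → ℝ}

lemma hasSubgaussianMGF_sum_mul_of_iIndepFun (hind : iIndepFun ζ μ)
    (hmeas : ∀ i, Measurable (ζ i)) (hmean : ∀ i, ∫ ω, ζ i ω ∂μ = 0)
    (hbd : ∀ i, ∀ᵐ ω ∂μ, ζ i ω ∈ Set.Icc (-1 : ℝ) 1) (r : ι → ℝ) :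
    HasSubgaussianMGF (fun ω ↦ ∑ i, r i * ζ i ω) ⟨∑ i, r i ^ 2, by positivity⟩ μ := by
  have := hind.isProbabilityMeasure
  have hterm (i : ι) : HasSubgaussianMGF (fun ω ↦ r i * ζ i ω) ⟨r i ^ 2, sq_nonneg _⟩ μ := by
    have hparam : (⟨r i ^ 2, sq_nonneg _⟩ * (‖(1 : ℝ) - -1‖₊ / 2) ^ 2 : ℝ≥0) =
        ⟨r i ^ 2, sq_nonneg _⟩ := by
      norm_num
      exact mul_one _
    exact hparam ▸ (hasSubgaussianMGF_of_mem_Icc_of_integral_eq_zero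
      (hmeas i).aemeasurable (hbd i) (hmean i)).const_mul (r i)
  have hparam : ∑ i, (⟨r i ^ 2, sq_nonneg _⟩ : ℝ≥0) = ⟨∑ i, r i ^ 2, by positivity⟩ :=
    NNReal.eq (NNReal.coe_sum ..)
  exact hparam ▸ HasSubgaussianMGF.sum_of_iIndepFun (s := Finset.univ)
    (hind.comp (fun i ↦ (r i * ·)) fun i ↦ measurable_const_mul (r i)) fun i _ ↦ hterm i

end WeightedSum

/-- Ambiguous chance constraint: any `x` satisfying the second-order cone constraint
with radius `Ω = √(ln ε⁻²)` satisfies the chance constraint with tolerance `ε`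
for EVERY distribution of `ζ` with independent zero-mean coordinates in `[-1,1]`. -/
theorem stmt_2 (L n : ℕ) (ε : ℝ) (hε : ε ∈ Set.Ioo (0 : ℝ) 1)
    (Om : ℝ) (hOm : Om = Real.sqrt (Real.log (1 / ε ^ 2)))
    (abar : Fin n → ℝ) (a : Fin L → Fin n → ℝ) (hbar : ℝ) (h : Fin L → ℝ)
    (x : Fin n → ℝ)
    (hsocc : Om * Real.sqrt (∑ ℓ, (∑ i, a ℓ i * x i - h ℓ) ^ 2) ≤
      hbar - ∑ i, abar i * x i) :
    ∀ (α : Type) (_ : MeasurableSpace α) (μ : Measure α), IsProbabilityMeasure μ →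
      ∀ ζ : Fin L → α → ℝ, (∀ ℓ, Measurable (ζ ℓ)) →
        iIndepFun ζ μ →
        (∀ ℓ, ∫ ω, ζ ℓ ω ∂μ = 0) →
        (∀ ℓ, ∀ᵐ ω ∂μ, ζ ℓ ω ∈ Set.Icc (-1 : ℝ) 1) →
        μ {ω | ∑ i, abar i * x i + ∑ ℓ, ζ ℓ ω * (∑ i, a ℓ i * x i) >
            hbar + ∑ ℓ, ζ ℓ ω * h ℓ} ≤ ENNReal.ofReal ε := by
  intro α _ μ _ ζ hζ hind hmean hbd
  set c : Fin L → ℝ := fun ℓ ↦ ∑ i, a ℓ i * x i - h ℓ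
  have hevent : {ω | ∑ i, abar i * x i + ∑ ℓ, ζ ℓ ω * (∑ i, a ℓ i * x i) >
      hbar + ∑ ℓ, ζ ℓ ω * h ℓ} = {ω | hbar - ∑ i, abar i * x i < ∑ ℓ, c ℓ * ζ ℓ ω} := by
    ext ω
    simp only [Set.mem_ofPred_eq, c, sub_mul, Finset.sum_sub_distrib, mul_comm (ζ _ ω)]
    constructor <;> intro <;> linarith
  have htail := (hasSubgaussianMGF_sum_mul_of_iIndepFun hind hζ hmean hbd c
    ).measureReal_lt_le_exp_neg_sq_div_two (hOm ▸ sqrt_nonneg _) hsocc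
  rw [hOm, exp_neg_sqrt_log_one_div_sq_sq_div_two hε.1 hε.2.le] at htail
  rw [hevent, ← ENNReal.ofReal_toReal (measure_ne_top μ _)]
  exact ENNReal.ofReal_le_ofReal htail
end

section
/- Let ζ¹,…,ζ^S ∈ ℝ^L be scenarios, let p : ℝ^L → ℝ^{n₁}, o : ℝ^L → ℝ, T : ℝ^L → ℝ^{m₂×n₁} (entrywise), and h : ℝ^L → ℝ^{m₂} be affine maps, and let q ∈ ℝ^{n₂} and W ∈ ℝ^{m₂×n₂} be fixed (fixed recourse). Suppose (w̄, ū, v̄¹,…,v̄^S) with ū ∈ ℝ^{n₁}, v̄^s ∈ ℝ^{n₂} satisfies, for every s = 1,…,S: p(ζ^s)ᵀū + qᵀv̄^s − w̄ ≤ −o(ζ^s) and T(ζ^s)ū + W v̄^s ≤ h(ζ^s) (componentwise). Then for every λ = (λ₁,…,λ_S) with λ_s ≥ 0 and Σ_s λ_s = 1, setting ζ = Σ_s λ_s ζ^s and v = Σ_s λ_s v̄^s, one has p(ζ)ᵀū + qᵀv − w̄ ≤ −o(ζ) and T(ζ)ū + W v ≤ h(ζ). -/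
/-- An affine map into a module sends affine combinations to combinations. -/
lemma affine_map_combo {V W : Type*} [AddCommGroup V] [Module ℝ V]
    [AddCommGroup W] [Module ℝ W] {S : ℕ} (f : V →ᵃ[ℝ] W)
    (lam : Fin S → ℝ) (hsum : ∑ s, lam s = 1) (x : Fin S → V) :
    f (∑ s, lam s • x s) = ∑ s, lam s • f (x s) := by
  have h1 := Finset.univ.map_affineCombination x lam hsum f
  rw [Finset.affineCombination_eq_linear_combination _ _ _ hsum,
    Finset.affineCombination_eq_linear_combination _ _ _ hsum] at h1
  simpa using h1

lemma swap_mul {α β : Type*} [Fintype α] [Fintype β]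
    (a : α → β → ℝ) (u : β → ℝ) (lam : α → ℝ) :
    ∑ x, (∑ s, lam s * a s x) * u x = ∑ s, lam s * ∑ x, a s x * u x := by
  simp_rw [Finset.sum_mul, Finset.mul_sum, mul_assoc]
  exact Finset.sum_comm

/-- Feasibility part of Theorem 2.1 (fixed recourse, scenario-generated uncertainty):
a feasible solution of the tractable problem, augmented with the decision rule
`v(ζ) = ∑ λ_s v̄^s` for `ζ = ∑ λ_s ζ^s`, is feasible for the adjustable robust
counterpart at `ζ`. -/
theorem stmt_8 (L n₁ n₂ m₂ S : ℕ)
    (ζs : Fin S → Fin L → ℝ)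
    (p : (Fin L → ℝ) →ᵃ[ℝ] (Fin n₁ → ℝ))
    (o : (Fin L → ℝ) →ᵃ[ℝ] ℝ)
    (T : (Fin L → ℝ) →ᵃ[ℝ] Matrix (Fin m₂) (Fin n₁) ℝ)
    (h : (Fin L → ℝ) →ᵃ[ℝ] (Fin m₂ → ℝ))
    (q : Fin n₂ → ℝ) (W : Matrix (Fin m₂) (Fin n₂) ℝ)
    (w : ℝ) (u : Fin n₁ → ℝ) (v : Fin S → Fin n₂ → ℝ)
    (hfeas : ∀ s, (∑ i, p (ζs s) i * u i) + (∑ i, q i * v s i) - w ≤ - o (ζs s) ∧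
        (T (ζs s)).mulVec u + W.mulVec (v s) ≤ h (ζs s))
    (lam : Fin S → ℝ) (hlam : ∀ s, 0 ≤ lam s) (hsum : ∑ s, lam s = 1) :
    ((∑ i, p (∑ s, lam s • ζs s) i * u i) +
        (∑ i, q i * (∑ s, lam s • v s) i) - w ≤ - o (∑ s, lam s • ζs s)) ∧
      (T (∑ s, lam s • ζs s)).mulVec u + W.mulVec (∑ s, lam s • v s) ≤
        h (∑ s, lam s • ζs s) := by
  have hp := affine_map_combo p lam hsum ζs
  have ho := affine_map_combo o lam hsum ζs
  have hT := affine_map_combo T lam hsum ζs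
  have hh := affine_map_combo h lam hsum ζs
  constructor
  · rw [hp, ho]
    have hsumle : ∑ s, lam s * ((∑ i, p (ζs s) i * u i) + (∑ i, q i * v s i) - w)
        ≤ ∑ s, lam s * (- o (ζs s)) :=
      Finset.sum_le_sum (fun s _ => mul_le_mul_of_nonneg_left (hfeas s).1 (hlam s))
    calc (∑ i, (∑ s, lam s • p (ζs s)) i * u i)
          + (∑ i, q i * (∑ s, lam s • v s) i) - w
        = ∑ s, lam s * ((∑ i, p (ζs s) i * u i) + (∑ i, q i * v s i) - w) := by
          simp only [mul_sub, mul_add, Finset.sum_add_distrib, Finset.sum_sub_distrib,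
            Finset.sum_apply, Pi.smul_apply, smul_eq_mul, ← Finset.sum_mul, hsum, one_mul]
          rw [swap_mul (fun s i => p (ζs s) i) u lam]
          congr 1
          simp_rw [Finset.mul_sum, mul_left_comm]
          rw [Finset.sum_comm (f := fun (i : Fin S) (x : Fin n₂) => q x * (lam i * v i x))]
      _ ≤ ∑ s, lam s * (- o (ζs s)) := hsumle
      _ = - ∑ s, lam s • o (ζs s) := by simp [mul_neg]
  · rw [hT, hh]
    intro j
    have hsumle : ∑ s, lam s * (((T (ζs s)).mulVec u + W.mulVec (v s)) j)
        ≤ ∑ s, lam s * (h (ζs s) j) :=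
      Finset.sum_le_sum (fun s _ => mul_le_mul_of_nonneg_left ((hfeas s).2 j) (hlam s))
    calc ((∑ s, lam s • T (ζs s)).mulVec u + W.mulVec (∑ s, lam s • v s)) j
        = ∑ s, lam s * (((T (ζs s)).mulVec u + W.mulVec (v s)) j) := by
          simp only [Pi.add_apply, Matrix.mulVec, dotProduct,
            Matrix.sum_apply, Matrix.smul_apply, Finset.sum_apply, Pi.smul_apply,
            smul_eq_mul, mul_add, Finset.sum_add_distrib]
          congr 1
          · exact swap_mul (fun s i => T (ζs s) j i) u lam
          · simp_rw [Finset.mul_sum, mul_left_comm]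
            exact Finset.sum_comm
      _ ≤ ∑ s, lam s * (h (ζs s) j) := hsumle
      _ = (∑ s, lam s • h (ζs s)) j := by simp
end

section
/- Let ζ¹,…,ζ^S ∈ ℝ^L be scenarios, let p : ℝ^L → ℝ^{n₁}, o : ℝ^L → ℝ, T : ℝ^L → ℝ^{m₂×n₁} (entrywise), and h : ℝ^L → ℝ^{m₂} be affine maps, and let q ∈ ℝ^{n₂} and W ∈ ℝ^{m₂×n₂} be fixed. Define the ARC value as the infimum of w over all triples (w, u, V) with u ∈ ℝ^{n₁} and V : ℝ^L → ℝ^{n₂} an arbitrary function such that for every ζ in the convex hull of {ζ¹,…,ζ^S}: p(ζ)ᵀu + qᵀV(ζ) − w ≤ −o(ζ) and T(ζ)u + W V(ζ) ≤ h(ζ). Define the tractable value as the infimum of w over all (w, u, v¹,…,v^S) such that for every s: p(ζ^s)ᵀu + qᵀv^s − w ≤ −o(ζ^s) and T(ζ^s)u + W v^s ≤ h(ζ^s). Then the ARC value and the tractable value are equal (as infima in the extended reals). -/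
/-!
Fix the first-stage decision `(w, u)`. Because the recourse data `q`, `W` do not depend on `ζ`,
the constraints are affine inequalities jointly in the uncertain parameter `ζ` and the recourse
`y`, so the pairs `(ζ, y)` satisfying them form a convex set, and so does its projection: the set
of `ζ` admitting some feasible recourse. If that projection contains every scenario it contains
their convex hull, and choosing a recourse for each `ζ` turns scenario-wise recourses
`v¹, …, v^S` into an adjustable policy `V`. The converse is the restriction `v^s = V ζ^s`.
-/

open Matrix

section Convex

variable {𝕜 E F G : Type*}

theorem Convex.exists_forall_convexHull_mk_mem [Semiring 𝕜] [PartialOrder 𝕜]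
    [AddCommGroup E] [Module 𝕜 E] [AddCommGroup F] [Module 𝕜 F]
    {K : Set (E × F)} (hK : Convex 𝕜 K) {s : Set E} (hs : ∀ x ∈ s, ∃ y, (x, y) ∈ K) :
    ∃ V : E → F, ∀ x ∈ convexHull 𝕜 s, (x, V x) ∈ K := by
  have hull_sub : convexHull 𝕜 s ⊆ LinearMap.fst 𝕜 E F '' K :=
    convexHull_min (fun x hx => (hs x hx).elim fun y hy => ⟨(x, y), hy, rfl⟩)
      (hK.linear_image _)
  have : ∀ x, ∃ y, x ∈ convexHull 𝕜 s → (x, y) ∈ K := fun x => by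
    by_cases hx : x ∈ convexHull 𝕜 s
    · obtain ⟨⟨x, y⟩, hy, rfl⟩ := hull_sub hx
      exact ⟨y, fun _ => hy⟩
    · exact ⟨0, fun h => absurd h hx⟩
  choose V hV using this
  exact ⟨V, hV⟩

theorem convex_setOf_affineMap_le [Ring 𝕜] [PartialOrder 𝕜] [AddCommGroup E] [Module 𝕜 E]
    [AddCommGroup G] [PartialOrder G] [IsOrderedAddMonoid G] [Module 𝕜 G] [PosSMulMono 𝕜 G]
    (φ ψ : E →ᵃ[𝕜] G) : Convex 𝕜 {x | φ x ≤ ψ x} := by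
  simpa [Set.preimage, sub_nonpos] using (convex_Iic (0 : G)).affine_preimage (φ - ψ)

end Convex

section Recourse

variable {L n₁ n₂ m₂ : ℕ} (p : (Fin L → ℝ) →ᵃ[ℝ] (Fin n₁ → ℝ)) (o : (Fin L → ℝ) →ᵃ[ℝ] ℝ)
  (T : (Fin L → ℝ) →ᵃ[ℝ] Matrix (Fin m₂) (Fin n₁) ℝ) (h : (Fin L → ℝ) →ᵃ[ℝ] (Fin m₂ → ℝ))
  (q : Fin n₂ → ℝ) (W : Matrix (Fin m₂) (Fin n₂) ℝ) (w : ℝ) (u : Fin n₁ → ℝ)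

def IsFeasibleRecourse (ζ : Fin L → ℝ) (y : Fin n₂ → ℝ) : Prop :=
  (∑ i, p ζ i * u i) + (∑ i, q i * y i) - w ≤ - o ζ ∧ (T ζ).mulVec u + W.mulVec y ≤ h ζ

theorem convex_setOf_isFeasibleRecourse :
    Convex ℝ {z : (Fin L → ℝ) × (Fin n₂ → ℝ) | IsFeasibleRecourse p o T h q W w u z.1 z.2} := by
  let fst := AffineMap.fst (k := ℝ) (P1 := Fin L → ℝ) (P2 := Fin n₂ → ℝ)
  let snd := LinearMap.snd ℝ (Fin L → ℝ) (Fin n₂ → ℝ)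
  -- `∑ i, a i * b i` unfolds to `a ⬝ᵥ b`, so the set is this intersection up to defeq.
  exact (convex_setOf_affineMap_le
      (((dotProductBilin ℝ ℝ).flip u).toAffineMap.comp (p.comp fst)
        + ((dotProductBilin ℝ ℝ q).comp snd).toAffineMap - AffineMap.const ℝ _ w)
      (-o.comp fst)).inter
    (convex_setOf_affineMap_le
      (((mulVecBilin ℝ ℝ).flip u).toAffineMap.comp (T.comp fst)
        + (W.mulVecLin.comp snd).toAffineMap)
      (h.comp fst))

end Recourse

/-- Optimal-value equality of Theorem 2.1: under fixed recourse and the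
scenario-generated uncertainty set `Conv{ζ¹,…,ζ^S}`, the adjustable robust
counterpart and the tractable scenario problem have the same optimal value
(as infima in the extended reals). -/
theorem stmt_9 (L n₁ n₂ m₂ S : ℕ)
    (ζs : Fin S → Fin L → ℝ)
    (p : (Fin L → ℝ) →ᵃ[ℝ] (Fin n₁ → ℝ))
    (o : (Fin L → ℝ) →ᵃ[ℝ] ℝ)
    (T : (Fin L → ℝ) →ᵃ[ℝ] Matrix (Fin m₂) (Fin n₁) ℝ)
    (h : (Fin L → ℝ) →ᵃ[ℝ] (Fin m₂ → ℝ))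
    (q : Fin n₂ → ℝ) (W : Matrix (Fin m₂) (Fin n₂) ℝ) :
    sInf {wE : EReal | ∃ (w : ℝ) (u : Fin n₁ → ℝ) (V : (Fin L → ℝ) → (Fin n₂ → ℝ)),
        wE = (w : EReal) ∧
        ∀ ζ ∈ convexHull ℝ (Set.range ζs),
          ((∑ i, p ζ i * u i) + (∑ i, q i * V ζ i) - w ≤ - o ζ ∧
            (T ζ).mulVec u + W.mulVec (V ζ) ≤ h ζ)} =
    sInf {wE : EReal | ∃ (w : ℝ) (u : Fin n₁ → ℝ) (v : Fin S → Fin n₂ → ℝ),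
        wE = (w : EReal) ∧
        ∀ s, ((∑ i, p (ζs s) i * u i) + (∑ i, q i * v s i) - w ≤ - o (ζs s) ∧
          (T (ζs s)).mulVec u + W.mulVec (v s) ≤ h (ζs s))} := by
  congr 1
  ext wE
  constructor
  · rintro ⟨w, u, V, rfl, hV⟩
    exact ⟨w, u, fun s => V (ζs s), rfl,
      fun s => hV (ζs s) (subset_convexHull ℝ _ (Set.mem_range_self s))⟩
  · rintro ⟨w, u, v, rfl, hv⟩
    obtain ⟨V, hV⟩ :=
      (convex_setOf_isFeasibleRecourse p o T h q W w u).exists_forall_convexHull_mk_mem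
        (Set.forall_mem_range.2 fun s => ⟨v s, hv s⟩)
    exact ⟨w, u, V, rfl, hV⟩
end

section
/- Let ζ₁,…,ζ_D be independent real-valued random variables on a probability space, each with mean zero and taking values in [−1,1] almost surely. Let b̄ ∈ ℝ^D, ρ₂ ≥ 0, F ∈ ℝ^D with F_j ≥ 0, and define the random cost vector b(ζ) with components b(ζ)_j = b̄_j + ζ_j ρ₂ F_j. Define f(x,y,z;b) = q Σ_{k,i,j} t_{ijk} x_{ijk} + q Σ_j b_j y_j − αq Σ_{k,i,j} t_{ijk}(x_{ijk} − z_{ijk}) with q ≥ 0. Let Ω ≥ 0 and suppose (w, x, y, z) satisfies the second-order cone constraint w − f(x,y,z;b̄) ≥ Ω·√(Σ_{j=1}^D (q ρ₂ F_j y_j)²). Then Prob{ w ≥ f(x,y,z;b(ζ)) } ≥ 1 − e^{−Ω²/2}. -/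
/-!
The random cost exceeds the nominal one by `S = ∑ j, a j * ζ j` with `a j = q ρ₂ F j y j`.
By Hoeffding's lemma each `ζ j` is sub-Gaussian with variance proxy `1`, so by independence `S`
is sub-Gaussian with variance proxy `‖a‖²`, and Chernoff's bound gives
`P(S > Ω ‖a‖) ≤ exp (-Ω² / 2)`. The cone constraint says that the cost constraint can only fail
when `S > Ω ‖a‖`.
-/

open MeasureTheory ProbabilityTheory

/-- Total cost `f(x,y,z;b)` of the supply planning problem. -/
noncomputable def supplyCost {K : Type*} [Fintype K] {O : K → Type*} [∀ k, Fintype (O k)]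
    {D : ℕ} (t : ∀ k, O k → Fin D → ℝ) (q α : ℝ)
    (x : ∀ k, O k → Fin D → ℝ) (y : Fin D → ℝ) (z : ∀ k, O k → Fin D → ℝ)
    (b : Fin D → ℝ) : ℝ :=
  q * ∑ k, ∑ i, ∑ j, t k i j * x k i j + q * ∑ j, b j * y j
    - α * q * ∑ k, ∑ i, ∑ j, t k i j * (x k i j - z k i j)

lemma supplyCost_add {K : Type*} [Fintype K] {O : K → Type*} [∀ k, Fintype (O k)]
    {D : ℕ} (t : ∀ k, O k → Fin D → ℝ) (q α : ℝ)
    (x : ∀ k, O k → Fin D → ℝ) (y : Fin D → ℝ) (z : ∀ k, O k → Fin D → ℝ)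
    (b d : Fin D → ℝ) :
    supplyCost t q α x y z (fun j => b j + d j) =
      supplyCost t q α x y z b + ∑ j, q * d j * y j := by
  simp only [supplyCost, add_mul, Finset.sum_add_distrib, mul_add, mul_assoc, Finset.mul_sum]
  ring

namespace ProbabilityTheory.HasSubgaussianMGF

variable {Ω : Type*} [MeasurableSpace Ω] {μ : Measure Ω} [IsFiniteMeasure μ]

lemma measureReal_mul_sqrt_lt_le {X : Ω → ℝ} {c : NNReal} (h : HasSubgaussianMGF X c μ)
    {r : ℝ} (hr : 0 ≤ r) :
    μ.real {ω | r * √(c : ℝ) < X ω} ≤ Real.exp (-r ^ 2 / 2) := by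
  -- For `c = 0` Chernoff's bound is vacuous (`-ε ^ 2 / 0 = 0`), but then `X = 0` a.e.
  rcases eq_or_ne c 0 with rfl | hc
  · have hX : X =ᵐ[μ] 0 := ae_eq_zero_of_hasSubgaussianMGF_zero h
    have hnull : μ {ω | 0 < X ω} = 0 := by
      refine measure_eq_zero_iff_ae_notMem.2 ?_
      filter_upwards [hX] with ω hω
      simp [hω]
    simp [Measure.real, hnull, Real.exp_nonneg]
  have hc' : (0 : ℝ) < c := by positivity
  calc μ.real {ω | r * √(c : ℝ) < X ω}
      ≤ μ.real {ω | r * √(c : ℝ) ≤ X ω} :=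
        measureReal_mono (Set.ofPred_subset_ofPred.2 fun _ => le_of_lt)
    _ ≤ Real.exp (-(r * √(c : ℝ)) ^ 2 / (2 * c)) := h.measure_ge_le (by positivity)
    _ = Real.exp (-r ^ 2 / 2) := by
        rw [mul_pow, Real.sq_sqrt hc'.le]
        field_simp

end ProbabilityTheory.HasSubgaussianMGF

lemma hasSubgaussianMGF_sum_mul_of_iIndepFun_s14 {Ω ι : Type*} [MeasurableSpace Ω]
    {μ : Measure Ω} [IsProbabilityMeasure μ] {ζ : ι → Ω → ℝ}
    (hmeas : ∀ j, AEMeasurable (ζ j) μ) (hindep : iIndepFun ζ μ)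
    (hmean : ∀ j, μ[ζ j] = 0) (hbdd : ∀ j, ∀ᵐ ω ∂μ, ζ j ω ∈ Set.Icc (-1 : ℝ) 1)
    (a : ι → ℝ) (s : Finset ι) :
    HasSubgaussianMGF (fun ω => ∑ j ∈ s, a j * ζ j ω) (∑ j ∈ s, ‖a j‖₊ ^ 2) μ := by
  refine HasSubgaussianMGF.sum_of_iIndepFun
    (hindep.comp (fun j r => a j * r) fun j => measurable_const_mul (a j)) fun j _ => ?_
  have hζ := hasSubgaussianMGF_of_mem_Icc_of_integral_eq_zero (hmeas j) (hbdd j) (hmean j)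
  convert hζ.const_mul (a j) using 1
  · rfl
  · apply NNReal.eq
    norm_num [Real.norm_eq_abs, sq_abs]
    exact (mul_one (a j ^ 2)).symm

theorem stmt_14_general {Ωs : Type*} [MeasurableSpace Ωs] (μ : Measure Ωs)
    [IsProbabilityMeasure μ] {D : ℕ} (ζ : Fin D → Ωs → ℝ)
    (hmeas : ∀ j, Measurable (ζ j))
    (hindep : iIndepFun ζ μ)
    (hmean : ∀ j, ∫ ω, ζ j ω ∂μ = 0)
    (hbdd : ∀ j, ∀ᵐ ω ∂μ, ζ j ω ∈ Set.Icc (-1 : ℝ) 1)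
    {K : Type*} [Fintype K] {O : K → Type*} [∀ k, Fintype (O k)]
    (t : ∀ k, O k → Fin D → ℝ) (q α ρ₂ : ℝ)
    (bbar F : Fin D → ℝ) (Om : ℝ) (hOm : 0 ≤ Om)
    (w : ℝ) (x z : ∀ k, O k → Fin D → ℝ) (y : Fin D → ℝ)
    (hsocc : Om * Real.sqrt (∑ j, (q * ρ₂ * F j * y j) ^ 2) ≤
      w - supplyCost t q α x y z bbar) :
    1 - ENNReal.ofReal (Real.exp (-Om ^ 2 / 2)) ≤
      μ {ω | supplyCost t q α x y z (fun j => bbar j + ζ j ω * (ρ₂ * F j)) ≤ w} := by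
  set a : Fin D → ℝ := fun j => q * ρ₂ * F j * y j
  have hS := hasSubgaussianMGF_sum_mul_of_iIndepFun_s14 (fun j => (hmeas j).aemeasurable) hindep
    hmean hbdd a Finset.univ
  have hvar : ((∑ j, ‖a j‖₊ ^ 2 : NNReal) : ℝ) = ∑ j, a j ^ 2 := by
    push_cast
    simp only [Real.norm_eq_abs, sq_abs]
  have hfail : {ω | supplyCost t q α x y z (fun j => bbar j + ζ j ω * (ρ₂ * F j)) ≤ w}ᶜ ⊆
      {ω | Om * √((∑ j, ‖a j‖₊ ^ 2 : NNReal) : ℝ) < ∑ j, a j * ζ j ω} := by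
    intro ω hω
    simp only [Set.mem_compl_iff, Set.mem_ofPred_eq, not_le, supplyCost_add] at hω ⊢
    have hcost : ∑ j, q * (ζ j ω * (ρ₂ * F j)) * y j = ∑ j, a j * ζ j ω :=
      Finset.sum_congr rfl fun j _ => by ring
    rw [hvar]
    linarith
  rw [tsub_le_iff_right]
  calc (1 : ENNReal) ≤ μ _ + μ _ := measure_univ.symm.trans_le (measure_univ_le_add_compl _)
    _ ≤ _ := by
      gcongr
      refine (measure_mono hfail).trans ?_
      rw [ENNReal.le_ofReal_iff_toReal_le (measure_ne_top _ _) (Real.exp_pos _).le]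
      exact hS.measureReal_mul_sqrt_lt_le hOm

/-- Probability guarantee for the RO-ell model: a feasible solution of the robust
problem with ellipsoidal cost uncertainty satisfies the cost constraint with
probability at least `1 - exp(-Ω²/2)`, for any distribution of `ζ` with
independent zero-mean coordinates in `[-1,1]` a.s. -/
theorem stmt_14 {Ωs : Type*} [MeasurableSpace Ωs] (μ : Measure Ωs)
    [IsProbabilityMeasure μ] {D : ℕ} (ζ : Fin D → Ωs → ℝ)
    (hmeas : ∀ j, Measurable (ζ j))
    (hindep : iIndepFun ζ μ)
    (hmean : ∀ j, ∫ ω, ζ j ω ∂μ = 0)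
    (hbdd : ∀ j, ∀ᵐ ω ∂μ, ζ j ω ∈ Set.Icc (-1 : ℝ) 1)
    {K : Type*} [Fintype K] {O : K → Type*} [∀ k, Fintype (O k)]
    (t : ∀ k, O k → Fin D → ℝ) (q α ρ₂ : ℝ) (hq : 0 ≤ q) (hρ₂ : 0 ≤ ρ₂)
    (bbar F : Fin D → ℝ) (hF : ∀ j, 0 ≤ F j) (Om : ℝ) (hOm : 0 ≤ Om)
    (w : ℝ) (x z : ∀ k, O k → Fin D → ℝ) (y : Fin D → ℝ)
    (hsocc : Om * Real.sqrt (∑ j, (q * ρ₂ * F j * y j) ^ 2) ≤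
      w - supplyCost t q α x y z bbar) :
    1 - ENNReal.ofReal (Real.exp (-Om ^ 2 / 2)) ≤
      μ {ω | supplyCost t q α x y z (fun j => bbar j + ζ j ω * (ρ₂ * F j)) ≤ w} :=
  stmt_14_general μ ζ hmeas hindep hmean hbdd t q α ρ₂ bbar F Om hOm w x z y hsocc
end
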